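/- arXiv:2411.03139 — 2 statements merged into one kernel-verified Lean document; each statement's English description precedes it below -/
import Mathlib

section
/- Let p be a probability distribution on 2^[m] whose support is a natural distributive lattice L = J(P). Let G = ([m], E) be a graph and suppose p lies in the Euclidean closure in ℝ^{2^[m]} of the set of probability distributions that factor according to G. Then p itself factors according to G. -/
open scoped BigOperators
attribute [local instance] Classical.propDecidable

noncomputable section

/-- The order ideals of a partial order `P` on `Fin m`. -/
def orderIdeals {m : ℕ} (P : PartialOrder (Fin m)) : Set (Finset (Fin m)) :=
  {S | ∀ t ∈ S, ∀ s, P.le s t → s ∈ S}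

/-- `i` covers `j` in the partial order `P`. -/
def Covers {m : ℕ} (P : PartialOrder (Fin m)) (i j : Fin m) : Prop :=
  P.lt j i ∧ ∀ r, ¬ (P.lt j r ∧ P.lt r i)

/-- The minimal graph of a natural lattice `L = J(P)`: edges are the cover relations of `P`. -/
def minimalGraph {m : ℕ} (P : PartialOrder (Fin m)) : SimpleGraph (Fin m) where
  Adj i j := Covers P i j ∨ Covers P j i
  symm := ⟨by intro i j h; tauto⟩
  loopless := ⟨by
    intro i h
    rcases h with h | h <;>
      exact (@lt_irrefl _ P.toPreorder i) h.1⟩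

/-- `p` satisfies the pairwise Markov statements of `G`. -/
def PairwiseMarkov {m : ℕ} (G : SimpleGraph (Fin m)) (p : Finset (Fin m) → ℝ) : Prop :=
  ∀ i j : Fin m, i ≠ j → ¬ G.Adj i j →
    ∀ C : Finset (Fin m), i ∉ C → j ∉ C →
      p C * p (C ∪ {i, j}) = p (C ∪ {i}) * p (C ∪ {j})

/-- `S` is a maximal clique of `G`. -/
def IsMaxClique {m : ℕ} (G : SimpleGraph (Fin m)) (S : Finset (Fin m)) : Prop :=
  G.IsClique (S : Set (Fin m)) ∧
    ∀ T : Finset (Fin m), G.IsClique (T : Set (Fin m)) → S ⊆ T → T = S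

/-- `p` factors according to the graph `G`: there are nonnegative parameters `a S T`,
one for each maximal clique `S` of `G` and each `T ⊆ S`, and `Z > 0`, such that
`p T = (1/Z) * ∏_{S maximal clique} a S (S ∩ T)`. -/
def FactorsAccording {m : ℕ} (G : SimpleGraph (Fin m)) (p : Finset (Fin m) → ℝ) : Prop :=
  ∃ (a : Finset (Fin m) → Finset (Fin m) → ℝ) (Z : ℝ),
    0 < Z ∧ (∀ S T, 0 ≤ a S T) ∧
    ∀ T : Finset (Fin m),
      p T = (1 / Z) * ∏ S ∈ Finset.univ.filter (fun S => IsMaxClique G S), a S (S ∩ T)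

namespace LF

variable {m : ℕ} (P : PartialOrder (Fin m))

lemma plt_def {a b : Fin m} : P.lt a b ↔ P.le a b ∧ ¬ P.le b a := P.lt_iff_le_not_ge a b

lemma ple_of_lt {a b : Fin m} (h : P.lt a b) : P.le a b := ((plt_def P).mp h).1

lemma plt_of_le_of_ne {a b : Fin m} (h : P.le a b) (hne : a ≠ b) : P.lt a b :=
  (plt_def P).mpr ⟨h, fun hba => hne (P.le_antisymm a b h hba)⟩

lemma pne_of_lt {a b : Fin m} (h : P.lt a b) : a ≠ b := by
  rintro rfl; exact ((plt_def P).mp h).2 ((plt_def P).mp h).1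

lemma plt_irrefl (a : Fin m) : ¬ P.lt a a := fun h => pne_of_lt P h rfl

lemma plt_trans {a b c : Fin m} (h1 : P.lt a b) (h2 : P.lt b c) : P.lt a c := by
  refine (plt_def P).mpr ⟨P.le_trans _ _ _ (ple_of_lt P h1) (ple_of_lt P h2), fun hca => ?_⟩
  exact ((plt_def P).mp h1).2 (P.le_trans _ _ _ (ple_of_lt P h2) hca)

lemma plt_of_le_of_lt {a b c : Fin m} (h1 : P.le a b) (h2 : P.lt b c) : P.lt a c := by
  refine (plt_def P).mpr ⟨P.le_trans _ _ _ h1 (ple_of_lt P h2), fun hca => ?_⟩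
  exact ((plt_def P).mp h2).2 (P.le_trans _ _ _ hca h1)

lemma mem_orderIdeals {S : Finset (Fin m)} :
    S ∈ orderIdeals P ↔ ∀ t ∈ S, ∀ s, P.le s t → s ∈ S := Iff.rfl

lemma empty_mem_orderIdeals : (∅ : Finset (Fin m)) ∈ orderIdeals P := by
  intro t ht; simp at ht

/-- the set of `P`-maximal elements of `V` -/
def maxElems (V : Finset (Fin m)) : Finset (Fin m) :=
  V.filter (fun a => ∀ x ∈ V, P.le a x → x = a)

lemma maxElems_subset (V : Finset (Fin m)) : maxElems P V ⊆ V := Finset.filter_subset _ _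

lemma mem_maxElems {V : Finset (Fin m)} {a : Fin m} :
    a ∈ maxElems P V ↔ a ∈ V ∧ ∀ x ∈ V, P.le a x → x = a := Finset.mem_filter

lemma sdiff_mem_orderIdeals {V A : Finset (Fin m)} (hV : V ∈ orderIdeals P)
    (hA : A ⊆ maxElems P V) : V \ A ∈ orderIdeals P := by
  intro t ht s hst
  rw [Finset.mem_sdiff] at ht ⊢
  have hsV : s ∈ V := hV t ht.1 s hst
  refine ⟨hsV, fun hsA => ?_⟩
  have hmax := (mem_maxElems P).mp (hA hsA)
  exact ht.2 ((hmax.2 t ht.1 hst) ▸ hsA)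

lemma union_mem_orderIdeals {W A : Finset (Fin m)} (hW : W ∈ orderIdeals P)
    (hA : ∀ a ∈ A, ∀ x, P.lt x a → x ∈ W) : W ∪ A ∈ orderIdeals P := by
  intro t ht s hst
  rw [Finset.mem_union] at ht ⊢
  rcases ht with ht | ht
  · exact Or.inl (hW t ht s hst)
  · by_cases hs : s = t
    · exact Or.inr (hs ▸ ht)
    · exact Or.inl (hA t ht s (plt_of_le_of_ne P hst hs))

/-- every element of a finite set lies below a maximal element -/
lemma exists_le_maxElem (V : Finset (Fin m)) : ∀ v ∈ V, ∃ a ∈ maxElems P V, P.le v a := by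
  have H : ∀ n : ℕ, ∀ v ∈ V, (V.filter (fun x => P.lt v x)).card ≤ n →
      ∃ a ∈ maxElems P V, P.le v a := by
    intro n
    induction n with
    | zero =>
      intro v hv h0
      refine ⟨v, ?_, P.le_refl v⟩
      rw [mem_maxElems]
      refine ⟨hv, fun x hx hle => ?_⟩
      by_contra hne
      have : x ∈ V.filter (fun x => P.lt v x) :=
        Finset.mem_filter.mpr ⟨hx, plt_of_le_of_ne P hle (Ne.symm hne)⟩
      simp [Finset.card_eq_zero.mp (Nat.le_zero.mp h0)] at this
    | succ n ih =>
      intro v hv h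
      by_cases hmax : ∀ x ∈ V, P.le v x → x = v
      · exact ⟨v, mem_maxElems P |>.mpr ⟨hv, hmax⟩, P.le_refl v⟩
      · push_neg at hmax
        obtain ⟨x, hxV, hvx, hne⟩ := hmax
        have hlt : P.lt v x := plt_of_le_of_ne P hvx (Ne.symm hne)
        have hss : (V.filter (fun y => P.lt x y)) ⊂ (V.filter (fun y => P.lt v y)) := by
          refine Finset.ssubset_iff_of_subset ?_ |>.mpr ?_
          · intro y hy
            rw [Finset.mem_filter] at hy ⊢
            exact ⟨hy.1, plt_trans P hlt hy.2⟩
          · exact ⟨x, Finset.mem_filter.mpr ⟨hxV, hlt⟩, by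
              simp only [Finset.mem_filter]
              exact fun hc => plt_irrefl P x hc.2⟩
        obtain ⟨a, ha, hxa⟩ := ih x hxV (by
          have := Finset.card_lt_card hss
          omega)
        exact ⟨a, ha, P.le_trans _ _ _ hvx hxa⟩
  intro v hv
  exact H _ v hv le_rfl

/-- every nonempty finite set has a `P`-minimal element -/
lemma exists_minimal (D : Finset (Fin m)) (hD : D.Nonempty) :
    ∃ a ∈ D, ∀ x ∈ D, ¬ P.lt x a := by
  have H : ∀ n : ℕ, ∀ v ∈ D, (D.filter (fun x => P.lt x v)).card ≤ n →
      ∃ a ∈ D, ∀ x ∈ D, ¬ P.lt x a := by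
    intro n
    induction n with
    | zero =>
      intro v hv h0
      refine ⟨v, hv, fun x hx hlt => ?_⟩
      have : x ∈ D.filter (fun x => P.lt x v) := Finset.mem_filter.mpr ⟨hx, hlt⟩
      simp [Finset.card_eq_zero.mp (Nat.le_zero.mp h0)] at this
    | succ n ih =>
      intro v hv h
      by_cases hmin : ∀ x ∈ D, ¬ P.lt x v
      · exact ⟨v, hv, hmin⟩
      · push_neg at hmin
        obtain ⟨x, hxD, hlt⟩ := hmin
        have hss : (D.filter (fun y => P.lt y x)) ⊂ (D.filter (fun y => P.lt y v)) := by
          refine Finset.ssubset_iff_of_subset ?_ |>.mpr ?_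
          · intro y hy
            rw [Finset.mem_filter] at hy ⊢
            exact ⟨hy.1, plt_trans P hy.2 hlt⟩
          · exact ⟨x, Finset.mem_filter.mpr ⟨hxD, hlt⟩, by
              simp only [Finset.mem_filter]
              exact fun hc => plt_irrefl P x hc.2⟩
        exact ih x hxD (by have := Finset.card_lt_card hss; omega)
  obtain ⟨v, hv⟩ := hD
  exact H _ v hv le_rfl

/-- a non-ideal set admits a cover pair crossing it -/
lemma exists_cover_pair {T : Finset (Fin m)} (hT : T ∉ orderIdeals P) :
    ∃ i j, Covers P i j ∧ i ∈ T ∧ j ∉ T := by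
  rw [mem_orderIdeals] at hT
  push_neg at hT
  obtain ⟨t, htT, s, hst, hsT⟩ := hT
  have hlt : P.lt s t := plt_of_le_of_ne P hst (by rintro rfl; exact hsT htT)
  clear hst
  have H : ∀ n : ℕ, ∀ s t : Fin m,
      (Finset.univ.filter (fun r => P.lt s r ∧ P.lt r t)).card ≤ n →
      P.lt s t → t ∈ T → s ∉ T → ∃ i j, Covers P i j ∧ i ∈ T ∧ j ∉ T := by
    intro n
    induction n with
    | zero =>
      intro s t h0 hlt htT hsT
      refine ⟨t, s, ⟨hlt, fun r hr => ?_⟩, htT, hsT⟩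
      have : r ∈ Finset.univ.filter (fun r => P.lt s r ∧ P.lt r t) := by
        simp [hr.1, hr.2]
      simp [Finset.card_eq_zero.mp (Nat.le_zero.mp h0)] at this
    | succ n ih =>
      intro s t h hlt htT hsT
      by_cases hbet : ∀ r, ¬ (P.lt s r ∧ P.lt r t)
      · exact ⟨t, s, ⟨hlt, hbet⟩, htT, hsT⟩
      · push_neg at hbet
        obtain ⟨r, hsr, hrt⟩ := hbet
        by_cases hrT : r ∈ T
        · refine ih s r ?_ hsr hrT hsT
          have hss : (Finset.univ.filter (fun x => P.lt s x ∧ P.lt x r)) ⊂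
              (Finset.univ.filter (fun x => P.lt s x ∧ P.lt x t)) := by
            refine Finset.ssubset_iff_of_subset ?_ |>.mpr ?_
            · intro y hy
              simp only [Finset.mem_filter, Finset.mem_univ, true_and] at hy ⊢
              exact ⟨hy.1, plt_trans P hy.2 hrt⟩
            · refine ⟨r, by simp [hsr, hrt], by simp [plt_irrefl]⟩
          have := Finset.card_lt_card hss
          omega
        · refine ih r t ?_ hrt htT hrT
          have hss : (Finset.univ.filter (fun x => P.lt r x ∧ P.lt x t)) ⊂
              (Finset.univ.filter (fun x => P.lt s x ∧ P.lt x t)) := by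
            refine Finset.ssubset_iff_of_subset ?_ |>.mpr ?_
            · intro y hy
              simp only [Finset.mem_filter, Finset.mem_univ, true_and] at hy ⊢
              exact ⟨plt_trans P hsr hy.1, hy.2⟩
            · refine ⟨r, by simp [hsr, hrt], by simp [plt_irrefl]⟩
          have := Finset.card_lt_card hss
          omega
  exact H _ s t le_rfl hlt htT hsT

/-- every clique is contained in a maximal clique -/
lemma exists_maxClique (G : SimpleGraph (Fin m)) {c : Finset (Fin m)}
    (hc : G.IsClique (c : Set (Fin m))) : ∃ S, IsMaxClique G S ∧ c ⊆ S := by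
  have hne : (Finset.univ.filter
      (fun S : Finset (Fin m) => G.IsClique (S : Set (Fin m)) ∧ c ⊆ S)).Nonempty :=
    ⟨c, by simp [hc]⟩
  obtain ⟨S, hSmem, hmax⟩ := Finset.exists_max_image _ Finset.card hne
  simp only [Finset.mem_filter, Finset.mem_univ, true_and] at hSmem
  refine ⟨S, ⟨hSmem.1, fun U hU hSU => ?_⟩, hSmem.2⟩
  have hUmem : U ∈ Finset.univ.filter
      (fun S : Finset (Fin m) => G.IsClique (S : Set (Fin m)) ∧ c ⊆ S) := by
    simp [hU, hSmem.2.trans hSU]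
  exact (Finset.eq_of_subset_of_card_le hSU (hmax U hUmem)).symm

variable {G : SimpleGraph (Fin m)} {p : Finset (Fin m) → ℝ}

lemma factors_pairwiseMarkov {q : Finset (Fin m) → ℝ}
    (hq : FactorsAccording G q) : PairwiseMarkov G q := by
  obtain ⟨a, Z, hZ, ha, hfac⟩ := hq
  intro i j hij hnadj C hiC hjC
  have key : (∏ S ∈ Finset.univ.filter (fun S => IsMaxClique G S), a S (S ∩ C)) *
      (∏ S ∈ Finset.univ.filter (fun S => IsMaxClique G S), a S (S ∩ (C ∪ {i, j}))) =
      (∏ S ∈ Finset.univ.filter (fun S => IsMaxClique G S), a S (S ∩ (C ∪ {i}))) *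
      (∏ S ∈ Finset.univ.filter (fun S => IsMaxClique G S), a S (S ∩ (C ∪ {j}))) := by
    rw [← Finset.prod_mul_distrib, ← Finset.prod_mul_distrib]
    apply Finset.prod_congr rfl
    intro S hS
    have hclique : G.IsClique (S : Set (Fin m)) := by
      simp only [Finset.mem_filter] at hS
      exact hS.2.1
    have hnotboth : ¬ (i ∈ S ∧ j ∈ S) := by
      rintro ⟨hi, hj⟩
      exact hnadj (hclique (by simpa using hi) (by simpa using hj) hij)
    by_cases hiS : i ∈ S
    · have hjS : j ∉ S := fun hj => hnotboth ⟨hiS, hj⟩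
      have e1 : S ∩ (C ∪ {i, j}) = S ∩ (C ∪ {i}) := by
        ext x
        simp only [Finset.mem_inter, Finset.mem_union, Finset.mem_insert, Finset.mem_singleton]
        constructor
        · rintro ⟨hxS, hx | hx | hx⟩
          · exact ⟨hxS, Or.inl hx⟩
          · exact ⟨hxS, Or.inr hx⟩
          · exact absurd (hx ▸ hxS) hjS
        · rintro ⟨hxS, hx | hx⟩
          · exact ⟨hxS, Or.inl hx⟩
          · exact ⟨hxS, Or.inr (Or.inl hx)⟩
      have e2 : S ∩ (C ∪ {j}) = S ∩ C := by
        ext x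
        simp only [Finset.mem_inter, Finset.mem_union, Finset.mem_singleton]
        constructor
        · rintro ⟨hxS, hx | hx⟩
          · exact ⟨hxS, hx⟩
          · exact absurd (hx ▸ hxS) hjS
        · rintro ⟨hxS, hx⟩
          exact ⟨hxS, Or.inl hx⟩
      rw [e1, e2]; try ring
    · by_cases hjS : j ∈ S
      · have e1 : S ∩ (C ∪ {i, j}) = S ∩ (C ∪ {j}) := by
          ext x
          simp only [Finset.mem_inter, Finset.mem_union, Finset.mem_insert, Finset.mem_singleton]
          constructor
          · rintro ⟨hxS, hx | hx | hx⟩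
            · exact ⟨hxS, Or.inl hx⟩
            · exact absurd (hx ▸ hxS) hiS
            · exact ⟨hxS, Or.inr hx⟩
          · rintro ⟨hxS, hx | hx⟩
            · exact ⟨hxS, Or.inl hx⟩
            · exact ⟨hxS, Or.inr (Or.inr hx)⟩
        have e2 : S ∩ (C ∪ {i}) = S ∩ C := by
          ext x
          simp only [Finset.mem_inter, Finset.mem_union, Finset.mem_singleton]
          constructor
          · rintro ⟨hxS, hx | hx⟩
            · exact ⟨hxS, hx⟩
            · exact absurd (hx ▸ hxS) hiS
          · rintro ⟨hxS, hx⟩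
            exact ⟨hxS, Or.inl hx⟩
        rw [e1, e2]; try ring
      · have e1 : S ∩ (C ∪ {i, j}) = S ∩ C := by
          ext x
          simp only [Finset.mem_inter, Finset.mem_union, Finset.mem_insert, Finset.mem_singleton]
          constructor
          · rintro ⟨hxS, hx | hx | hx⟩
            · exact ⟨hxS, hx⟩
            · exact absurd (hx ▸ hxS) hiS
            · exact absurd (hx ▸ hxS) hjS
          · rintro ⟨hxS, hx⟩
            exact ⟨hxS, Or.inl hx⟩
        have e2 : S ∩ (C ∪ {i}) = S ∩ C := by
          ext x
          simp only [Finset.mem_inter, Finset.mem_union, Finset.mem_singleton]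
          constructor
          · rintro ⟨hxS, hx | hx⟩
            · exact ⟨hxS, hx⟩
            · exact absurd (hx ▸ hxS) hiS
          · rintro ⟨hxS, hx⟩
            exact ⟨hxS, Or.inl hx⟩
        have e3 : S ∩ (C ∪ {j}) = S ∩ C := by
          ext x
          simp only [Finset.mem_inter, Finset.mem_union, Finset.mem_singleton]
          constructor
          · rintro ⟨hxS, hx | hx⟩
            · exact ⟨hxS, hx⟩
            · exact absurd (hx ▸ hxS) hjS
          · rintro ⟨hxS, hx⟩
            exact ⟨hxS, Or.inl hx⟩
        rw [e1, e2, e3]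
  rw [hfac C, hfac (C ∪ {i, j}), hfac (C ∪ {i}), hfac (C ∪ {j})]
  calc (1 / Z * ∏ S ∈ Finset.univ.filter (fun S => IsMaxClique G S), a S (S ∩ C)) *
      (1 / Z * ∏ S ∈ Finset.univ.filter (fun S => IsMaxClique G S), a S (S ∩ (C ∪ {i, j})))
      = 1 / Z * (1 / Z) *
        ((∏ S ∈ Finset.univ.filter (fun S => IsMaxClique G S), a S (S ∩ C)) *
        (∏ S ∈ Finset.univ.filter (fun S => IsMaxClique G S), a S (S ∩ (C ∪ {i, j})))) := by ring
    _ = 1 / Z * (1 / Z) *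
        ((∏ S ∈ Finset.univ.filter (fun S => IsMaxClique G S), a S (S ∩ (C ∪ {i}))) *
        (∏ S ∈ Finset.univ.filter (fun S => IsMaxClique G S), a S (S ∩ (C ∪ {j})))) := by rw [key]
    _ = _ := by ring

lemma closure_pairwiseMarkov
    (hlim : p ∈ closure {q : Finset (Fin m) → ℝ |
      (∀ S, 0 ≤ q S) ∧ (∑ S : Finset (Fin m), q S = 1) ∧ FactorsAccording G q}) :
    PairwiseMarkov G p := by
  intro i j hij hnadj C hiC hjC
  have hclosed : IsClosed {q : Finset (Fin m) → ℝ |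
      q C * q (C ∪ {i, j}) = q (C ∪ {i}) * q (C ∪ {j})} := by
    apply isClosed_eq
    · exact (continuous_apply C).mul (continuous_apply _)
    · exact (continuous_apply _).mul (continuous_apply _)
  have hsub : {q : Finset (Fin m) → ℝ |
      (∀ S, 0 ≤ q S) ∧ (∑ S : Finset (Fin m), q S = 1) ∧ FactorsAccording G q} ⊆
      {q : Finset (Fin m) → ℝ |
      q C * q (C ∪ {i, j}) = q (C ∪ {i}) * q (C ∪ {j})} := by
    intro q hq
    exact factors_pairwiseMarkov hq.2.2 i j hij hnadj C hiC hjC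
  exact (closure_minimal hsub hclosed) hlim

lemma cover_adj (hpos : ∀ T ∈ orderIdeals P, 0 < p T)
    (hzero : ∀ T, T ∉ orderIdeals P → p T = 0) (hE : PairwiseMarkov G p)
    {i j : Fin m} (hc : Covers P i j) : G.Adj i j := by
  by_contra hnadj
  have hij : i ≠ j := (pne_of_lt P hc.1).symm
  set C : Finset (Fin m) := (Finset.univ.filter (fun s => P.lt s i)).erase j with hC
  have hiC : i ∉ C := by
    simp only [hC, Finset.mem_erase, Finset.mem_filter]
    rintro ⟨-, -, h⟩
    exact plt_irrefl P i h
  have hjC : j ∉ C := Finset.notMem_erase _ _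
  have hCmem : C ∈ orderIdeals P := by
    intro t ht s hst
    simp only [hC, Finset.mem_erase, Finset.mem_filter, Finset.mem_univ, true_and] at ht ⊢
    by_cases hs : s = t
    · exact hs ▸ ht
    · have hslt : P.lt s t := plt_of_le_of_ne P hst hs
      refine ⟨?_, plt_trans P hslt ht.2⟩
      rintro rfl
      exact hc.2 t ⟨hslt, ht.2⟩
  have hEmem : (insert i (Finset.univ.filter (fun s => P.lt s i))) ∈ orderIdeals P := by
    intro t ht s hst
    simp only [Finset.mem_insert, Finset.mem_filter, Finset.mem_univ, true_and] at ht ⊢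
    by_cases hs : s = t
    · exact hs ▸ ht
    · have hslt : P.lt s t := plt_of_le_of_ne P hst hs
      rcases ht with rfl | ht
      · exact Or.inr hslt
      · exact Or.inr (plt_trans P hslt ht)
  have hIJ : C ∪ {i, j} = insert i (Finset.univ.filter (fun s => P.lt s i)) := by
    ext x
    simp only [hC, Finset.mem_union, Finset.mem_erase, Finset.mem_filter, Finset.mem_univ,
      true_and, Finset.mem_insert, Finset.mem_singleton]
    constructor
    · rintro (⟨-, h⟩ | rfl | rfl)
      · exact Or.inr h
      · exact Or.inl rfl
      · exact Or.inr hc.1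
    · rintro (rfl | hx)
      · exact Or.inr (Or.inl rfl)
      · by_cases hxj : x = j
        · exact Or.inr (Or.inr hxj)
        · exact Or.inl ⟨hxj, hx⟩
  have hCi : C ∪ {i} ∉ orderIdeals P := by
    intro hmem
    have hjmem : j ∈ C ∪ {i} := hmem i (by simp) j (ple_of_lt P hc.1)
    simp only [Finset.mem_union, Finset.mem_singleton] at hjmem
    rcases hjmem with h | h
    · exact hjC h
    · exact hij h.symm
  have heq := hE i j hij hnadj C hiC hjC
  rw [hzero _ hCi, zero_mul] at heq
  have h1 : 0 < p C := hpos C hCmem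
  have h2 : 0 < p (C ∪ {i, j}) := by rw [hIJ]; exact hpos _ hEmem
  nlinarith

/-- the Möbius-type coefficient of the ideal `V` -/
def psi (p : Finset (Fin m) → ℝ) (V : Finset (Fin m)) : ℝ :=
  ∑ A ∈ (maxElems P V).powerset, (-1 : ℝ) ^ A.card * Real.log (p (V \ A))

lemma psi_empty : psi P p ∅ = Real.log (p ∅) := by
  have h : maxElems P (∅ : Finset (Fin m)) = ∅ := Finset.filter_empty _
  rw [psi, h]
  simp

lemma psi_eq_zero (hpos : ∀ T ∈ orderIdeals P, 0 < p T) (hE : PairwiseMarkov G p)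
    {V : Finset (Fin m)} (hV : V ∈ orderIdeals P)
    (hnc : ¬ G.IsClique ((maxElems P V : Finset (Fin m)) : Set (Fin m))) :
    psi P p V = 0 := by
  rw [SimpleGraph.isClique_iff, Set.Pairwise] at hnc
  push_neg at hnc
  obtain ⟨i, hiM, j, hjM, hij, hnadj⟩ := hnc
  rw [Finset.mem_coe] at hiM hjM
  set M : Finset (Fin m) := maxElems P V with hM
  set M0 : Finset (Fin m) := (M.erase i).erase j with hM0
  have hiM0 : i ∉ M0 := by
    simp only [hM0, Finset.mem_erase]
    rintro ⟨-, h, -⟩; exact h rfl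
  have hjM0 : j ∉ M0 := fun h => (Finset.mem_erase.mp h).1 rfl
  have hijM0 : i ∉ insert j M0 := by
    simp only [Finset.mem_insert]
    rintro (rfl | h)
    · exact hij rfl
    · exact hiM0 h
  have hMsplit : M = insert i (insert j M0) := by
    ext x
    simp only [hM0, Finset.mem_insert, Finset.mem_erase]
    constructor
    · intro hx
      by_cases hxi : x = i
      · exact Or.inl hxi
      · by_cases hxj : x = j
        · exact Or.inr (Or.inl hxj)
        · exact Or.inr (Or.inr ⟨hxj, hxi, hx⟩)
    · rintro (rfl | rfl | ⟨-, -, hx⟩) <;> first | exact hiM | exact hjM | exact hx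
  have hiV : i ∈ V := maxElems_subset P V hiM
  have hjV : j ∈ V := maxElems_subset P V hjM
  rw [psi, ← hM, hMsplit, Finset.sum_powerset_insert hijM0]
  simp only [Finset.sum_powerset_insert hjM0]
  rw [← Finset.sum_add_distrib, ← Finset.sum_add_distrib, ← Finset.sum_add_distrib]
  apply Finset.sum_eq_zero
  intro B hB
  rw [Finset.mem_powerset] at hB
  have hiB : i ∉ B := fun h => hiM0 (hB h)
  have hjB : j ∉ B := fun h => hjM0 (hB h)
  have hBM : B ⊆ M := by
    rw [hMsplit]
    exact hB.trans ((Finset.subset_insert _ _).trans (Finset.subset_insert _ _))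
  have hjBM : insert j B ⊆ M := Finset.insert_subset hjM hBM
  have hiBM : insert i B ⊆ M := Finset.insert_subset hiM hBM
  have hijBM : insert i (insert j B) ⊆ M := Finset.insert_subset hiM hjBM
  set C : Finset (Fin m) := V \ insert i (insert j B) with hCdef
  have idV : V \ B = C ∪ {i, j} := by
    ext x
    simp only [hCdef, Finset.mem_sdiff, Finset.mem_union, Finset.mem_insert,
      Finset.mem_singleton]
    by_cases hxi : x = i
    · subst hxi; simp [hiV, hiB]
    · by_cases hxj : x = j
      · subst hxj; simp [hjV, hjB]
      · simp [hxi, hxj]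
  have idI : V \ insert j B = C ∪ {i} := by
    ext x
    simp only [hCdef, Finset.mem_sdiff, Finset.mem_union, Finset.mem_insert,
      Finset.mem_singleton]
    by_cases hxi : x = i
    · subst hxi; simp [hiV, hiB, hij]
    · by_cases hxj : x = j
      · subst hxj; simp [hxi]
      · simp [hxi, hxj]
  have idJ : V \ insert i B = C ∪ {j} := by
    ext x
    simp only [hCdef, Finset.mem_sdiff, Finset.mem_union, Finset.mem_insert,
      Finset.mem_singleton]
    by_cases hxi : x = i
    · subst hxi; simp [hij]
    · by_cases hxj : x = j
      · subst hxj; simp [hjV, hjB, Ne.symm hij]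
      · simp [hxi, hxj]
  have hCmem : C ∈ orderIdeals P := sdiff_mem_orderIdeals P hV hijBM
  have hCij : C ∪ {i, j} ∈ orderIdeals P := idV ▸ sdiff_mem_orderIdeals P hV hBM
  have hCi : C ∪ {i} ∈ orderIdeals P := idI ▸ sdiff_mem_orderIdeals P hV hjBM
  have hCj : C ∪ {j} ∈ orderIdeals P := idJ ▸ sdiff_mem_orderIdeals P hV hiBM
  have hiC : i ∉ C := by simp [hCdef]
  have hjC : j ∉ C := by simp [hCdef]
  have heq := hE i j hij hnadj C hiC hjC
  have l1 : 0 < p C := hpos _ hCmem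
  have l2 : 0 < p (C ∪ {i, j}) := hpos _ hCij
  have l3 : 0 < p (C ∪ {i}) := hpos _ hCi
  have l4 : 0 < p (C ∪ {j}) := hpos _ hCj
  have lg : Real.log (p C) + Real.log (p (C ∪ {i, j})) =
      Real.log (p (C ∪ {i})) + Real.log (p (C ∪ {j})) := by
    rw [← Real.log_mul (ne_of_gt l1) (ne_of_gt l2), ← Real.log_mul (ne_of_gt l3) (ne_of_gt l4),
      heq]
  have c1 : (insert j B).card = B.card + 1 := Finset.card_insert_of_notMem hjB
  have c2 : (insert i B).card = B.card + 1 := Finset.card_insert_of_notMem hiB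
  have hjiB : i ∉ insert j B := by
    simp only [Finset.mem_insert]
    rintro (rfl | h)
    · exact hij rfl
    · exact hiB h
  have c3 : (insert i (insert j B)).card = B.card + 2 := by
    rw [Finset.card_insert_of_notMem hjiB, c1]
  rw [idV, idI, idJ, c1, c2, c3]
  rw [pow_succ, pow_succ, pow_succ]
  linear_combination ((-1:ℝ)^B.card) * lg

lemma sum_powerset_neg_one_real (K : Finset (Fin m)) :
    ∑ A ∈ K.powerset, (-1 : ℝ) ^ A.card = if K = ∅ then 1 else 0 := by
  have h := Finset.sum_powerset_neg_one_pow_card (x := K)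
  have h2 : ((∑ A ∈ K.powerset, (-1 : ℤ) ^ A.card : ℤ) : ℝ)
      = if K = ∅ then 1 else 0 := by
    rw [h]; split <;> simp
  rw [← h2]
  push_cast
  rfl

/-- Möbius inversion over the lattice of ideals contained in `T`. -/
lemma inversion (p : Finset (Fin m) → ℝ) {T : Finset (Fin m)} (hT : T ∈ orderIdeals P) :
    ∑ V ∈ T.powerset.filter (fun V => V ∈ orderIdeals P), psi P p V = Real.log (p T) := by
  classical
  set φ : Finset (Fin m) → ℝ := fun W => Real.log (p W) with hφ
  set ℐ : Finset (Finset (Fin m)) := T.powerset.filter (fun V => V ∈ orderIdeals P) with hI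
  set K : Finset (Fin m) → Finset (Fin m) := fun W =>
    Finset.univ.filter (fun a => a ∈ T ∧ a ∉ W ∧ ∀ x, P.lt x a → x ∈ W) with hK
  have memK : ∀ W a, a ∈ K W ↔ a ∈ T ∧ a ∉ W ∧ ∀ x, P.lt x a → x ∈ W := by
    intro W a
    simp [hK]
  have step1 : ∑ V ∈ ℐ, psi P p V =
      ∑ q ∈ ℐ.sigma (fun V => (maxElems P V).powerset), (-1 : ℝ) ^ q.2.card * φ (q.1 \ q.2) := by
    rw [Finset.sum_sigma]
    rfl
  rw [step1]
  have step2 : ∑ q ∈ ℐ.sigma (fun V => (maxElems P V).powerset),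
      (-1 : ℝ) ^ q.2.card * φ (q.1 \ q.2) =
      ∑ q ∈ ℐ.sigma (fun W => (K W).powerset), (-1 : ℝ) ^ q.2.card * φ q.1 := by
    apply Finset.sum_nbij' (i := fun q => ⟨q.1 \ q.2, q.2⟩) (j := fun q => ⟨q.1 ∪ q.2, q.2⟩)
    · rintro ⟨V, A⟩ hq
      rw [Finset.mem_sigma] at hq ⊢
      obtain ⟨hV, hA⟩ := hq
      rw [hI, Finset.mem_filter, Finset.mem_powerset] at hV
      rw [Finset.mem_powerset] at hA
      obtain ⟨hVT, hVid⟩ := hV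
      constructor
      · rw [hI, Finset.mem_filter, Finset.mem_powerset]
        exact ⟨(Finset.sdiff_subset).trans hVT, sdiff_mem_orderIdeals P hVid hA⟩
      · rw [Finset.mem_powerset]
        intro a ha
        have haM := (mem_maxElems P).mp (hA ha)
        rw [memK]
        refine ⟨hVT haM.1, by simp [ha], fun x hx => ?_⟩
        have hxV : x ∈ V := hVid a haM.1 x (ple_of_lt P hx)
        rw [Finset.mem_sdiff]
        refine ⟨hxV, fun hxA => ?_⟩
        have hxM := (mem_maxElems P).mp (hA hxA)
        exact pne_of_lt P hx (hxM.2 a haM.1 (ple_of_lt P hx)).symm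
    · rintro ⟨W, A⟩ hq
      rw [Finset.mem_sigma] at hq ⊢
      obtain ⟨hW, hA⟩ := hq
      rw [hI, Finset.mem_filter, Finset.mem_powerset] at hW
      rw [Finset.mem_powerset] at hA
      obtain ⟨hWT, hWid⟩ := hW
      have hAK : ∀ a ∈ A, a ∈ T ∧ a ∉ W ∧ ∀ x, P.lt x a → x ∈ W := by
        intro a ha
        exact (memK W a).mp (hA ha)
      constructor
      · rw [hI, Finset.mem_filter, Finset.mem_powerset]
        refine ⟨Finset.union_subset hWT (fun a ha => (hAK a ha).1), ?_⟩
        exact union_mem_orderIdeals P hWid (fun a ha => (hAK a ha).2.2)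
      · rw [Finset.mem_powerset]
        intro a ha
        rw [mem_maxElems]
        refine ⟨Finset.mem_union_right _ ha, fun y hy hle => ?_⟩
        by_contra hne
        have hlt : P.lt a y := plt_of_le_of_ne P hle (fun h => hne h.symm)
        rw [Finset.mem_union] at hy
        rcases hy with hy | hy
        · exact (hAK a ha).2.1 (hWid y hy a hle)
        · exact (hAK a ha).2.1 ((hAK y hy).2.2 a hlt)
    · rintro ⟨V, A⟩ hq
      rw [Finset.mem_sigma, Finset.mem_powerset] at hq
      have : (V \ A) ∪ A = V :=
        Finset.sdiff_union_of_subset (hq.2.trans (maxElems_subset P V))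
      exact Sigma.ext this (heq_of_eq rfl)
    · rintro ⟨W, A⟩ hq
      rw [Finset.mem_sigma, Finset.mem_powerset] at hq
      have hdisj : Disjoint W A := by
        rw [Finset.disjoint_right]
        intro a ha
        exact ((memK W a).mp (hq.2 ha)).2.1
      have : (W ∪ A) \ A = W := Finset.union_sdiff_cancel_right hdisj
      exact Sigma.ext this (heq_of_eq rfl)
    · rintro ⟨V, A⟩ _
      rfl
  rw [step2, Finset.sum_sigma]
  have step3 : ∀ W ∈ ℐ, (∑ A ∈ (K W).powerset, (-1 : ℝ) ^ A.card * φ W) =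
      (if W = T then φ W else 0) := by
    intro W hW
    rw [hI, Finset.mem_filter, Finset.mem_powerset] at hW
    rw [← Finset.sum_mul, sum_powerset_neg_one_real]
    have hiff : K W = ∅ ↔ W = T := by
      constructor
      · intro hKe
        by_contra hne
        have hne2 : (T \ W).Nonempty := by
          rw [Finset.sdiff_nonempty]
          exact fun h => hne (Finset.Subset.antisymm hW.1 h)
        obtain ⟨a, haD, hamin⟩ := exists_minimal P (T \ W) hne2
        rw [Finset.mem_sdiff] at haD
        have : a ∈ K W := by
          rw [memK]
          refine ⟨haD.1, haD.2, fun x hx => ?_⟩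
          have hxT : x ∈ T := hT a haD.1 x (ple_of_lt P hx)
          by_contra hxW
          exact hamin x (Finset.mem_sdiff.mpr ⟨hxT, hxW⟩) hx
        rw [hKe] at this
        simp at this
      · rintro rfl
        rw [Finset.eq_empty_iff_forall_notMem]
        intro a ha
        rw [memK] at ha
        exact ha.2.1 ha.1
    rw [if_congr hiff rfl rfl]
    split <;> simp
  rw [Finset.sum_congr rfl step3, Finset.sum_ite_eq' ℐ T φ,
    if_pos (by rw [hI, Finset.mem_filter, Finset.mem_powerset]; exact ⟨le_rfl, hT⟩)]

end LF

/-- If `p` has natural lattice support `L = J(P)` and `p` is a limit of probability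
distributions that factor according to `G`, then `p` factors according to `G`. -/
theorem limit_of_factoring_with_natural_lattice_support_factors
    (m : ℕ) (P : PartialOrder (Fin m)) (G : SimpleGraph (Fin m))
    (p : Finset (Fin m) → ℝ)
    (hnonneg : ∀ S, 0 ≤ p S)
    (hsum : ∑ S : Finset (Fin m), p S = 1)
    (hsupp : {S : Finset (Fin m) | 0 < p S} = orderIdeals P)
    (hlim : p ∈ closure {q : Finset (Fin m) → ℝ |
      (∀ S, 0 ≤ q S) ∧ (∑ S : Finset (Fin m), q S = 1) ∧ FactorsAccording G q}) :
    FactorsAccording G p := by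
  classical
  have hpos : ∀ T ∈ orderIdeals P, 0 < p T := by
    intro T hT
    rw [← hsupp] at hT
    exact hT
  have hzero : ∀ T, T ∉ orderIdeals P → p T = 0 := by
    intro T hT
    rw [← hsupp, Set.mem_setOf_eq, not_lt] at hT
    exact le_antisymm hT (hnonneg T)
  have hE : PairwiseMarkov G p := LF.closure_pairwiseMarkov hlim
  have hp0 : 0 < p ∅ := hpos ∅ (LF.empty_mem_orderIdeals P)
  -- choice of a maximal clique containing the maximal elements of each ideal
  have hsig : ∀ V : Finset (Fin m), ∃ S : Finset (Fin m),
      G.IsClique ((LF.maxElems P V : Finset (Fin m)) : Set (Fin m)) →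
        (IsMaxClique G S ∧ LF.maxElems P V ⊆ S) := by
    intro V
    by_cases h : G.IsClique ((LF.maxElems P V : Finset (Fin m)) : Set (Fin m))
    · obtain ⟨S, hS, hsub⟩ := LF.exists_maxClique G h
      exact ⟨S, fun _ => ⟨hS, hsub⟩⟩
    · exact ⟨∅, fun hc => absurd hc h⟩
  choose σ hσ using hsig
  set MC : Finset (Finset (Fin m)) := Finset.univ.filter (fun S => IsMaxClique G S) with hMC
  set Λ : Finset (Fin m) → Finset (Finset (Fin m)) := fun S =>
    (Finset.univ.filter (fun T : Finset (Fin m) => T ∈ orderIdeals P)).image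
      (fun T => S ∩ T) with hΛ
  set g : Finset (Fin m) → Finset (Fin m) → ℝ := fun S U =>
    ∑ V ∈ Finset.univ.filter (fun V => (V ∈ orderIdeals P ∧ V ≠ ∅ ∧
      G.IsClique ((LF.maxElems P V : Finset (Fin m)) : Set (Fin m))) ∧ σ V = S ∧
      LF.maxElems P V ⊆ U), LF.psi P p V with hg
  refine ⟨fun S U => if U ∈ Λ S then Real.exp (g S U) else 0, 1 / p ∅,
    by positivity, fun S U => by dsimp only; split
                                 · exact le_of_lt (Real.exp_pos _)
                                 · exact le_rfl, ?_⟩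
  intro T
  have h1Z : (1 : ℝ) / (1 / p ∅) = p ∅ := one_div_one_div _
  rw [h1Z]
  by_cases hTid : T ∈ orderIdeals P
  · -- T is an ideal
    have hmemΛ : ∀ S, S ∩ T ∈ Λ S := by
      intro S
      rw [hΛ]
      exact Finset.mem_image.mpr ⟨T, Finset.mem_filter.mpr ⟨Finset.mem_univ _, hTid⟩, rfl⟩
    have hprod : ∏ S ∈ MC, (if S ∩ T ∈ Λ S then Real.exp (g S (S ∩ T)) else 0) =
        ∏ S ∈ MC, Real.exp (g S (S ∩ T)) := by
      apply Finset.prod_congr rfl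
      intro S _
      rw [if_pos (hmemΛ S)]
    rw [← hMC, hprod, ← Real.exp_sum]
    -- compute the sum of the g's
    have key : ∑ S ∈ MC, g S (S ∩ T) = Real.log (p T) - Real.log (p ∅) := by
      have e1 : ∀ S ∈ MC, g S (S ∩ T) =
          ∑ V ∈ Finset.univ.filter (fun V => ((V ∈ orderIdeals P ∧ V ≠ ∅ ∧
            G.IsClique ((LF.maxElems P V : Finset (Fin m)) : Set (Fin m))) ∧
            LF.maxElems P V ⊆ T) ∧ σ V = S), LF.psi P p V := by
        intro S hS
        rw [hg]
        apply Finset.sum_congr _ (fun _ _ => rfl)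
        apply Finset.filter_congr
        intro V _
        constructor
        · rintro ⟨hc, hσV, hsub⟩
          exact ⟨⟨hc, hsub.trans Finset.inter_subset_right⟩, hσV⟩
        · rintro ⟨⟨hc, hsub⟩, hσV⟩
          refine ⟨hc, hσV, Finset.subset_inter ?_ hsub⟩
          rw [← hσV]
          exact (hσ V hc.2.2).2
      rw [Finset.sum_congr rfl e1]
      have e2 : ∀ S ∈ MC,
          (∑ V ∈ Finset.univ.filter (fun V => ((V ∈ orderIdeals P ∧ V ≠ ∅ ∧
            G.IsClique ((LF.maxElems P V : Finset (Fin m)) : Set (Fin m))) ∧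
            LF.maxElems P V ⊆ T) ∧ σ V = S), LF.psi P p V) =
          ∑ V ∈ Finset.univ.filter (fun V => (V ∈ orderIdeals P ∧ V ≠ ∅ ∧
            G.IsClique ((LF.maxElems P V : Finset (Fin m)) : Set (Fin m))) ∧
            LF.maxElems P V ⊆ T), (if σ V = S then LF.psi P p V else 0) := by
        intro S _
        rw [← Finset.sum_filter, Finset.filter_filter]
      rw [Finset.sum_congr rfl e2, Finset.sum_comm]
      have e3 : ∀ V ∈ Finset.univ.filter (fun V => (V ∈ orderIdeals P ∧ V ≠ ∅ ∧
            G.IsClique ((LF.maxElems P V : Finset (Fin m)) : Set (Fin m))) ∧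
            LF.maxElems P V ⊆ T),
          (∑ S ∈ MC, if σ V = S then LF.psi P p V else 0) = LF.psi P p V := by
        intro V hV
        rw [Finset.mem_filter] at hV
        rw [Finset.sum_ite_eq MC (σ V) (fun _ => LF.psi P p V)]
        rw [if_pos]
        rw [hMC, Finset.mem_filter]
        exact ⟨Finset.mem_univ _, ((hσ V hV.2.1.2.2).1)⟩
      rw [Finset.sum_congr rfl e3]
      -- drop the clique condition using psi_eq_zero
      have e4 : ∑ V ∈ Finset.univ.filter (fun V => (V ∈ orderIdeals P ∧ V ≠ ∅ ∧
            G.IsClique ((LF.maxElems P V : Finset (Fin m)) : Set (Fin m))) ∧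
            LF.maxElems P V ⊆ T), LF.psi P p V =
          ∑ V ∈ Finset.univ.filter (fun V => (V ∈ orderIdeals P ∧ V ≠ ∅) ∧
            LF.maxElems P V ⊆ T), LF.psi P p V := by
        apply Finset.sum_subset
        · intro V hV
          rw [Finset.mem_filter] at hV ⊢
          exact ⟨hV.1, ⟨hV.2.1.1, hV.2.1.2.1⟩, hV.2.2⟩
        · intro V hV hVn
          rw [Finset.mem_filter] at hV
          apply LF.psi_eq_zero P hpos hE hV.2.1.1
          intro hc
          apply hVn
          rw [Finset.mem_filter]
          exact ⟨hV.1, ⟨hV.2.1.1, hV.2.1.2, hc⟩, hV.2.2⟩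
      rw [e4]
      -- maxElems ⊆ T iff V ⊆ T for ideals V (T being an ideal)
      have e5 : Finset.univ.filter (fun V => ((V ∈ orderIdeals P ∧ V ≠ ∅) ∧
            LF.maxElems P V ⊆ T) : Finset (Fin m) → Prop) =
          Finset.univ.filter (fun V => (V ∈ orderIdeals P ∧ V ≠ ∅) ∧ V ⊆ T) := by
        apply Finset.filter_congr
        intro V _
        constructor
        · rintro ⟨⟨hVid, hVne⟩, hsub⟩
          refine ⟨⟨hVid, hVne⟩, fun v hv => ?_⟩
          obtain ⟨a, haM, hva⟩ := LF.exists_le_maxElem P V v hv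
          exact hTid a (hsub haM) v hva
        · rintro ⟨⟨hVid, hVne⟩, hsub⟩
          exact ⟨⟨hVid, hVne⟩, (LF.maxElems_subset P V).trans hsub⟩
      rw [e5]
      -- now relate to the full sum over ideals contained in T
      have e6 : T.powerset.filter (fun V => V ∈ orderIdeals P) =
          insert ∅ (Finset.univ.filter
            (fun V => ((V ∈ orderIdeals P ∧ V ≠ ∅) ∧ V ⊆ T) : Finset (Fin m) → Prop)) := by
        ext V
        simp only [Finset.mem_insert, Finset.mem_filter, Finset.mem_powerset, Finset.mem_univ,
          true_and]
        constructor
        · rintro ⟨hsub, hid⟩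
          by_cases hV : V = ∅
          · exact Or.inl hV
          · exact Or.inr ⟨⟨hid, hV⟩, hsub⟩
        · rintro (rfl | ⟨⟨hid, -⟩, hsub⟩)
          · exact ⟨Finset.empty_subset _, LF.empty_mem_orderIdeals P⟩
          · exact ⟨hsub, hid⟩
      have hnotmem : (∅ : Finset (Fin m)) ∉ Finset.univ.filter
          (fun V => ((V ∈ orderIdeals P ∧ V ≠ ∅) ∧ V ⊆ T) : Finset (Fin m) → Prop) := by
        rw [Finset.mem_filter]
        rintro ⟨-, ⟨-, h⟩, -⟩
        exact h rfl
      have e7 := LF.inversion P p hTid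
      rw [e6, Finset.sum_insert hnotmem, LF.psi_empty] at e7
      linarith
    rw [key, Real.exp_sub, Real.exp_log (hpos T hTid), Real.exp_log hp0]
    field_simp
  · -- T is not an ideal: the product vanishes
    obtain ⟨i, j, hcov, hiT, hjT⟩ := LF.exists_cover_pair P hTid
    have hadj : G.Adj i j := LF.cover_adj P hpos hzero hE hcov
    have hclique : G.IsClique (({i, j} : Finset (Fin m)) : Set (Fin m)) := by
      intro x hx y hy hne
      simp only [Finset.coe_insert, Finset.coe_singleton, Set.mem_insert_iff,
        Set.mem_singleton_iff] at hx hy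
      rcases hx with rfl | rfl <;> rcases hy with rfl | rfl
      · exact absurd rfl hne
      · exact hadj
      · exact hadj.symm
      · exact absurd rfl hne
    obtain ⟨S, hSmax, hsubS⟩ := LF.exists_maxClique G hclique
    have hiS : i ∈ S := hsubS (Finset.mem_insert_self _ _)
    have hjS : j ∈ S := hsubS (Finset.mem_insert.mpr (Or.inr (Finset.mem_singleton_self _)))
    have hnotΛ : S ∩ T ∉ Λ S := by
      rw [hΛ]
      intro hmem
      obtain ⟨T', hT', heq⟩ := Finset.mem_image.mp hmem
      rw [Finset.mem_filter] at hT'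
      have hiT' : i ∈ T' := by
        have : i ∈ S ∩ T' := heq ▸ Finset.mem_inter.mpr ⟨hiS, hiT⟩
        exact (Finset.mem_inter.mp this).2
      have hjT' : j ∈ T' := hT'.2 i hiT' j (LF.ple_of_lt P hcov.1)
      have : j ∈ S ∩ T := heq ▸ Finset.mem_inter.mpr ⟨hjS, hjT'⟩
      exact hjT ((Finset.mem_inter.mp this).2)
    have hSMC : S ∈ MC := by
      rw [hMC, Finset.mem_filter]
      exact ⟨Finset.mem_univ _, hSmax⟩
    rw [hzero T hTid, ← hMC,
      Finset.prod_eq_zero hSMC (by simp only [if_neg hnotΛ]), mul_zero]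

end
end

section
/- Suppose p is a probability distribution on 2^[m] whose support is a natural distributive lattice L = J(P), where P is a partial order on [m]. Suppose p satisfies all the pairwise Markov statements of a graph G = ([m], E). If i covers j in P, then {i,j} is an edge of G. -/
open scoped BigOperators
attribute [local instance] Classical.propDecidable

noncomputable section

/-- If `p` has natural lattice support `L = J(P)` and satisfies the pairwise Markov
statements of `G`, then every cover relation `i ⋗ j` of `P` is an edge of `G`. -/
theorem cover_relation_is_edge
    (m : ℕ) (P : PartialOrder (Fin m)) (G : SimpleGraph (Fin m))
    (p : Finset (Fin m) → ℝ)
    (hnonneg : ∀ S, 0 ≤ p S)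
    (hsum : ∑ S : Finset (Fin m), p S = 1)
    (hsupp : {S : Finset (Fin m) | 0 < p S} = orderIdeals P)
    (hpw : PairwiseMarkov G p)
    (i j : Fin m) (hcov : Covers P i j) :
    G.Adj i j := by
  by_contra hadj
  have hji : P.lt j i := hcov.1
  have hle : ∀ {a b : Fin m}, P.lt a b → P.le a b :=
    fun h => (P.lt_iff_le_not_ge _ _).mp h |>.1
  have hlt_of_le_of_lt : ∀ {a b c : Fin m}, P.le a b → P.lt b c → P.lt a c := by
    intro a b c h1 h2
    rcases (P.lt_iff_le_not_ge _ _).mp h2 with ⟨h2le, h2n⟩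
    refine (P.lt_iff_le_not_ge _ _).mpr ⟨P.le_trans _ _ _ h1 h2le, fun hca => ?_⟩
    exact h2n (P.le_trans _ _ _ hca h1)
  have hij : i ≠ j := by
    rintro rfl
    exact ((P.lt_iff_le_not_ge _ _).mp hji).2 ((P.lt_iff_le_not_ge _ _).mp hji).1
  set C : Finset (Fin m) := Finset.univ.filter (fun s => P.lt s i ∧ s ≠ j) with hCdef
  have hmemC : ∀ s, s ∈ C ↔ (P.lt s i ∧ s ≠ j) := by
    intro s; simp [hCdef]
  have hiC : i ∉ C := by
    rw [hmemC]
    rintro ⟨h, -⟩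
    exact ((P.lt_iff_le_not_ge i i).mp h).2 ((P.lt_iff_le_not_ge i i).mp h).1
  have hjC : j ∉ C := by rw [hmemC]; rintro ⟨-, h⟩; exact h rfl
  have key := hpw i j hij hadj C hiC hjC
  -- C is an order ideal
  have hCid : C ∈ orderIdeals P := by
    intro t ht s hs
    rw [hmemC] at ht ⊢
    refine ⟨hlt_of_le_of_lt hs ht.1, ?_⟩
    rintro rfl
    rcases eq_or_ne s t with rfl | hne
    · exact ht.2 rfl
    · refine hcov.2 t ⟨?_, ht.1⟩
      rcases (P.lt_iff_le_not_ge s t).mpr ⟨hs, fun hts => hne (P.le_antisymm _ _ hs hts)⟩ with h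
      exact h
  -- C ∪ {j} is an order ideal
  have hCjid : (C ∪ {j}) ∈ orderIdeals P := by
    intro t ht s hs
    simp only [Finset.mem_union, Finset.mem_singleton, hmemC] at ht ⊢
    have hti : P.lt t i := by
      rcases ht with h | rfl
      · exact h.1
      · exact hji
    rcases eq_or_ne s j with rfl | hsj
    · exact Or.inr rfl
    · exact Or.inl ⟨hlt_of_le_of_lt hs hti, hsj⟩
  -- C ∪ {i, j} is an order ideal
  have hCijid : (C ∪ {i, j}) ∈ orderIdeals P := by
    intro t ht s hs
    simp only [Finset.mem_union, Finset.mem_insert, Finset.mem_singleton, hmemC] at ht ⊢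
    have hti : P.le t i := by
      rcases ht with h | h | h
      · exact hle h.1
      · rw [h]
      · rw [h]; exact hle hji
    have hsi : P.le s i := P.le_trans _ _ _ hs hti
    rcases eq_or_ne s i with rfl | hsi'
    · exact Or.inr (Or.inl rfl)
    rcases eq_or_ne s j with rfl | hsj
    · exact Or.inr (Or.inr rfl)
    · exact Or.inl ⟨(P.lt_iff_le_not_ge s i).mpr
        ⟨hsi, fun his => hsi' (P.le_antisymm _ _ hsi his)⟩, hsj⟩
  -- C ∪ {i} is NOT an order ideal
  have hCinot : (C ∪ {i}) ∉ orderIdeals P := by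
    intro h
    have := h i (by simp) j (hle hji)
    simp only [Finset.mem_union, Finset.mem_singleton, hmemC] at this
    rcases this with h' | rfl
    · exact h'.2 rfl
    · exact hij rfl
  have hposC : 0 < p C := (Set.ext_iff.mp hsupp C).mpr hCid
  have hposCj : 0 < p (C ∪ {j}) := (Set.ext_iff.mp hsupp _).mpr hCjid
  have hposCij : 0 < p (C ∪ {i, j}) := (Set.ext_iff.mp hsupp _).mpr hCijid
  have hzero : p (C ∪ {i}) = 0 := by
    have hn : ¬ (0 < p (C ∪ {i})) := fun h => hCinot ((Set.ext_iff.mp hsupp _).mp h)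
    exact le_antisymm (not_lt.mp hn) (hnonneg _)
  rw [hzero, zero_mul] at key
  exact absurd key (ne_of_gt (mul_pos hposC hposCij))

end
end
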